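/- Under axioms A1–A6 and the comparison hypothesis for all two-fold scaled products Γ^{(1−λ)} × Γ^{(λ)}, for each state X with X₀ ≺ X ≺ X₁ there is a unique λ ∈ [0,1] such that X ∼ ((1−λ)X₀, λX₁); this λ equals sup{λ : ((1−λ)X₀, λX₁) ≺ X} and also inf{λ : X ≺ ((1−λ)X₀, λX₁)}. -/

import Mathlib

/-!
Moving `δ` of weight from `X₀` to `X₁` is reversible in the presence of a catalyst:
`(((1-t)X₀, tX₁), δX₁) ∼ (((1-t-δ)X₀, (t+δ)X₁), δX₀)`. Stability (A6) yields the cancellation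
law `(U, W) ≺ (V, W) → U ≺ V`, and with it the catalyst identity shows that
`t ↦ ((1-t)X₀, tX₁)` is strictly increasing for `≺`, because `X₀ ≺≺ X₁`. By CH each point of
this path is comparable with `X`; stability again shows that the supremum `λ` of the points
below `X` is adiabatically equivalent to `X`, and strict monotonicity makes `λ` the greatest
point below `X` and the least point above it.
-/

/-- The scaled combination `((1-l)A, lB)`, with the conventions at the endpoints. -/
noncomputable def combo {St : Type*} (comp : St → St → St) (scale : ℝ → St → St)
    (A B : St) (l : ℝ) : St :=
  if l = 0 then A else if l = 1 then B else comp (scale (1 - l) A) (scale l B)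

open Filter Topology Set

/-- The fields `refl`, `trans`, `comp_mono`, `scale_mono`, `split_recombine`, `stability` are
the axioms A1–A6. -/
structure AdiabaticAxioms {St : Type*} (prec : St → St → Prop) (comp : St → St → St)
    (scale : ℝ → St → St) : Prop where
  comp_comm : ∀ X Y, comp X Y = comp Y X
  comp_assoc : ∀ X Y Z, comp (comp X Y) Z = comp X (comp Y Z)
  scale_one : ∀ X, scale 1 X = X
  scale_scale : ∀ (a b : ℝ) (X : St), 0 < a → 0 < b → scale a (scale b X) = scale (a * b) X
  scale_comp : ∀ (a : ℝ) (X Y : St), 0 < a → scale a (comp X Y) = comp (scale a X) (scale a Y)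
  refl : ∀ X, prec X X
  trans : ∀ {X Y Z}, prec X Y → prec Y Z → prec X Z
  comp_mono : ∀ {X X' Y Y'}, prec X X' → prec Y Y' → prec (comp X Y) (comp X' Y')
  scale_mono : ∀ {l : ℝ} {X Y : St}, 0 < l → prec X Y → prec (scale l X) (scale l Y)
  split_recombine : ∀ (l : ℝ) (X : St), 0 < l → l < 1 →
    AntisymmRel prec X (comp (scale (1 - l) X) (scale l X))
  stability : ∀ (X Y Z₀ Z₁ : St) (ε : ℕ → ℝ), (∀ n, 0 < ε n) → Tendsto ε atTop (𝓝 0) →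
    (∀ n, prec (comp X (scale (ε n) Z₀)) (comp Y (scale (ε n) Z₁))) → prec X Y

section Combo

variable {St : Type*} {comp : St → St → St} {scale : ℝ → St → St} {A B : St} {t : ℝ}

@[simp]
theorem combo_zero : combo comp scale A B 0 = A := by
  simp [combo]

@[simp]
theorem combo_one : combo comp scale A B 1 = B := by
  simp [combo]

theorem combo_of_mem_Ioo (ht : t ∈ Ioo 0 1) :
    combo comp scale A B t = comp (scale (1 - t) A) (scale t B) := by
  simp [combo, ht.1.ne', ht.2.ne]

theorem combo_symm (comp_comm : ∀ X Y, comp X Y = comp Y X) :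
    combo comp scale A B t = combo comp scale B A (1 - t) := by
  by_cases h0 : t = 0
  · simp [h0]
  by_cases h1 : t = 1
  · simp [h1]
  have h0' : 1 - t ≠ 0 := sub_ne_zero.2 (Ne.symm h1)
  have h1' : 1 - t ≠ 1 := fun h' => h0 (by linarith)
  simp [combo, h0, h1, h0', h1', comp_comm (scale (1 - t) A)]

end Combo

namespace AdiabaticAxioms

variable {St : Type*} {prec : St → St → Prop} {comp : St → St → St} {scale : ℝ → St → St}
  (h : AdiabaticAxioms prec comp scale)
include h

theorem equiv_comp_scale_scale {a b : ℝ} (ha : 0 < a) (hb : 0 < b) (Y : St) :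
    AntisymmRel prec (scale (a + b) Y) (comp (scale a Y) (scale b Y)) := by
  have hab : 0 < a + b := by linarith
  have hl : b / (a + b) < 1 := (div_lt_one hab).2 (by linarith)
  have hsplit := h.split_recombine _ (scale (a + b) Y) (div_pos hb hab) hl
  rwa [h.scale_scale _ _ _ (by linarith) hab, h.scale_scale _ _ _ (div_pos hb hab) hab,
    show (1 - b / (a + b)) * (a + b) = a by field_simp; ring,
    show b / (a + b) * (a + b) = b by field_simp] at hsplit

theorem equiv_comp_half (Y : St) :
    AntisymmRel prec Y (comp (scale (1 / 2) Y) (scale (1 / 2) Y)) := by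
  have := h.equiv_comp_scale_scale (a := 1 / 2) (b := 1 / 2) one_half_pos one_half_pos Y
  rwa [add_halves, h.scale_one] at this

theorem comp_scale_half_prec {U V Z : St} (hUV : prec (comp U Z) (comp V Z)) :
    prec (comp U (scale (1 / 2) Z)) (comp V (scale (1 / 2) Z)) := by
  set u := scale (1 / 2) U
  set v := scale (1 / 2) V
  set z := scale (1 / 2) Z
  have huv : prec (comp u z) (comp v z) := by
    have := h.scale_mono one_half_pos hUV
    rwa [h.scale_comp _ _ _ one_half_pos, h.scale_comp _ _ _ one_half_pos] at this
  have h₁ : prec (comp U z) (comp u (comp u z)) := by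
    rw [← h.comp_assoc]
    exact h.comp_mono (h.equiv_comp_half U).1 (h.refl z)
  have h₂ : prec (comp u (comp u z)) (comp v (comp u z)) := by
    rw [← h.comp_assoc v, h.comp_comm v u, h.comp_assoc]
    exact h.comp_mono (h.refl u) huv
  have h₃ : prec (comp v (comp v z)) (comp V z) := by
    rw [← h.comp_assoc]
    exact h.comp_mono (h.equiv_comp_half V).2 (h.refl z)
  exact h.trans h₁ (h.trans h₂ (h.trans (h.comp_mono (h.refl v) huv) h₃))

theorem prec_of_comp_prec_comp {U V W : St} (hUV : prec (comp U W) (comp V W)) : prec U V := by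
  refine h.stability U V W W (fun n => (1 / 2 : ℝ) ^ n) (fun n => by positivity)
    (tendsto_pow_atTop_nhds_zero_of_lt_one (by norm_num) (by norm_num)) fun n => ?_
  induction n with
  | zero => simpa [h.scale_one] using hUV
  | succ n ih =>
    have hsc : scale ((1 / 2 : ℝ) ^ (n + 1)) W = scale (1 / 2) (scale ((1 / 2) ^ n) W) := by
      rw [h.scale_scale _ _ _ one_half_pos (by positivity), pow_succ']
    simpa only [hsc] using h.comp_scale_half_prec ih

theorem prec_of_comp_prec_comp_left {U V W : St} (hUV : prec (comp W U) (comp W V)) :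
    prec U V :=
  h.prec_of_comp_prec_comp (by rwa [h.comp_comm U W, h.comp_comm V W])

theorem prec_of_scale_prec_scale {a : ℝ} {X Y : St} (ha : 0 < a)
    (hXY : prec (scale a X) (scale a Y)) : prec X Y := by
  have := h.scale_mono (inv_pos.2 ha) hXY
  rwa [h.scale_scale _ _ _ (inv_pos.2 ha) ha, h.scale_scale _ _ _ (inv_pos.2 ha) ha,
    inv_mul_cancel₀ ha.ne', h.scale_one, h.scale_one] at this

theorem prec_of_forall_small {δ : ℝ} {X Y Z₀ Z₁ : St} (hδ : 0 < δ)
    (hXY : ∀ ε, 0 < ε → ε < δ → prec (comp X (scale ε Z₀)) (comp Y (scale ε Z₁))) :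
    prec X Y := by
  refine h.stability X Y Z₀ Z₁ (fun n => δ / ((n : ℝ) + 2)) (fun n => by positivity)
    (tendsto_const_nhds.div_atTop (tendsto_atTop_add_const_right _ 2 tendsto_natCast_atTop_atTop))
    fun n => hXY _ (by positivity) ((div_lt_iff₀ (by positivity)).2 ?_)
  nlinarith [(n.cast_nonneg : (0 : ℝ) ≤ n)]

theorem comp_combo_scale_equiv (A B : St) {t δ : ℝ} (ht : 0 ≤ t) (hδ : 0 < δ)
    (htδ : t + δ ≤ 1) :
    AntisymmRel prec (comp (combo comp scale A B t) (scale δ B))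
      (comp (scale (1 - t) A) (scale (t + δ) B)) := by
  rcases ht.eq_or_lt with rfl | ht
  · rw [combo_zero, sub_zero, zero_add, h.scale_one]
    exact ⟨h.refl _, h.refl _⟩
  rw [combo_of_mem_Ioo ⟨ht, by linarith⟩, h.comp_assoc]
  have hsplit := h.equiv_comp_scale_scale ht hδ B
  exact ⟨h.comp_mono (h.refl _) hsplit.2, h.comp_mono (h.refl _) hsplit.1⟩

theorem comp_combo_add_scale_equiv (A B : St) {t δ : ℝ} (ht : 0 ≤ t) (hδ : 0 < δ)
    (htδ : t + δ ≤ 1) :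
    AntisymmRel prec (comp (combo comp scale A B (t + δ)) (scale δ A))
      (comp (scale (1 - t) A) (scale (t + δ) B)) := by
  have := h.comp_combo_scale_equiv B A (t := 1 - (t + δ)) (by linarith) hδ (by linarith)
  rwa [← combo_symm h.comp_comm, show 1 - (1 - (t + δ)) = t + δ by ring,
    show 1 - (t + δ) + δ = 1 - t by ring, h.comp_comm (scale (t + δ) B)] at this

theorem catalyst_equiv (A B : St) {t δ : ℝ} (ht : 0 ≤ t) (hδ : 0 < δ) (htδ : t + δ ≤ 1) :
    AntisymmRel prec (comp (combo comp scale A B t) (scale δ B))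
      (comp (combo comp scale A B (t + δ)) (scale δ A)) := by
  have h₁ := h.comp_combo_scale_equiv A B ht hδ htδ
  have h₂ := h.comp_combo_add_scale_equiv A B ht hδ htδ
  exact ⟨h.trans h₁.1 h₂.2, h.trans h₂.1 h₁.2⟩

variable {X₀ X₁ : St}

theorem combo_mono (href : prec X₀ X₁) {s t : ℝ} (hs : 0 ≤ s) (hst : s ≤ t) (ht : t ≤ 1) :
    prec (combo comp scale X₀ X₁ s) (combo comp scale X₀ X₁ t) := by
  rcases hst.eq_or_lt with rfl | hst
  · exact h.refl _
  obtain ⟨δ, hδ, rfl⟩ : ∃ δ, 0 < δ ∧ t = s + δ := ⟨t - s, by linarith, by ring⟩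
  refine h.prec_of_comp_prec_comp (W := scale δ X₀)
    (h.trans ?_ (h.catalyst_equiv X₀ X₁ hs hδ ht).1)
  exact h.comp_mono (h.refl _) (h.scale_mono hδ href)

theorem le_of_combo_prec_combo (hirr : ¬ prec X₁ X₀) {s t : ℝ} (hs : 0 ≤ s) (ht : t ≤ 1)
    (hts : prec (combo comp scale X₀ X₁ t) (combo comp scale X₀ X₁ s)) : t ≤ s := by
  by_contra! hst
  obtain ⟨δ, hδ, rfl⟩ : ∃ δ, 0 < δ ∧ t = s + δ := ⟨t - s, by linarith, by ring⟩
  refine hirr (h.prec_of_scale_prec_scale hδ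
    (h.prec_of_comp_prec_comp_left (W := combo comp scale X₀ X₁ s) ?_))
  exact h.trans (h.catalyst_equiv X₀ X₁ hs hδ ht).1 (h.comp_mono hts (h.refl _))

theorem combo_self_equiv (X : St) {t : ℝ} (ht : t ∈ Icc 0 1) :
    AntisymmRel prec (combo comp scale X X t) X := by
  rcases ht.1.eq_or_lt with rfl | ht₀
  · rw [combo_zero]
    exact ⟨h.refl X, h.refl X⟩
  rcases ht.2.eq_or_lt with rfl | ht₁
  · rw [combo_one]
    exact ⟨h.refl X, h.refl X⟩
  rw [combo_of_mem_Ioo ⟨ht₀, ht₁⟩]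
  exact (h.split_recombine t X ht₀ ht₁).symm

theorem exists_combo_equiv (href : prec X₀ X₁) {X : St} (h₀ : prec X₀ X) (h₁ : prec X X₁)
    (htotal : ∀ t ∈ Icc (0 : ℝ) 1,
      prec (combo comp scale X₀ X₁ t) X ∨ prec X (combo comp scale X₀ X₁ t)) :
    ∃ l ∈ Icc (0 : ℝ) 1, AntisymmRel prec X (combo comp scale X₀ X₁ l) := by
  set S := {t | t ∈ Icc (0 : ℝ) 1 ∧ prec (combo comp scale X₀ X₁ t) X}
  have h0S : (0 : ℝ) ∈ S := ⟨⟨le_rfl, zero_le_one⟩, by simpa using h₀⟩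
  have hSbdd : BddAbove S := ⟨1, fun t ht => ht.1.2⟩
  set l := sSup S
  have hl₀ : 0 ≤ l := le_csSup hSbdd h0S
  have hl₁ : l ≤ 1 := csSup_le ⟨0, h0S⟩ fun t ht => ht.1.2
  have below : ∀ t, 0 ≤ t → t < l → prec (combo comp scale X₀ X₁ t) X := fun t ht htl => by
    obtain ⟨s, hs, hts⟩ := exists_lt_of_lt_csSup ⟨0, h0S⟩ htl
    exact h.trans (h.combo_mono href ht hts.le hs.1.2) hs.2
  have above : ∀ t, l < t → t ≤ 1 → prec X (combo comp scale X₀ X₁ t) := fun t hlt ht =>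
    (htotal t ⟨by linarith, ht⟩).resolve_left fun hc =>
      (le_csSup hSbdd ⟨⟨by linarith, ht⟩, hc⟩).not_gt hlt
  refine ⟨l, ⟨hl₀, hl₁⟩, ?_, ?_⟩
  · rcases hl₁.eq_or_lt with hl | hl
    · simpa [hl] using h₁
    refine h.prec_of_forall_small (Z₀ := X₀) (Z₁ := X₁) (sub_pos.2 hl) fun ε hε hεl => ?_
    exact h.trans (h.comp_mono (above (l + ε) (by linarith) (by linarith)) (h.refl _))
      (h.catalyst_equiv X₀ X₁ hl₀ hε (by linarith)).2
  · rcases hl₀.eq_or_lt with hl | hl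
    · simpa [← hl] using h₀
    refine h.prec_of_forall_small (Z₀ := X₀) (Z₁ := X₁) hl fun ε hε hεl => ?_
    have hcat := h.catalyst_equiv X₀ X₁ (t := l - ε) (by linarith) hε (by linarith)
    rw [sub_add_cancel] at hcat
    exact h.trans hcat.2 (h.comp_mono (below (l - ε) (by linarith) (by linarith)) (h.refl _))

end AdiabaticAxioms

/-- Under A1–A6 and the comparison hypothesis for all two-fold scaled products
`Γ^{(1−λ)} × Γ^{(λ)}`, every `X` with `X₀ ≺ X ≺ X₁` (where `X₀ ≺≺ X₁`) is
adiabatically equivalent to `((1−λ)X₀, λX₁)` for a unique `λ ∈ [0,1]`, and this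
`λ` equals `sup{λ : ((1−λ)X₀, λX₁) ≺ X}` and `inf{λ : X ≺ ((1−λ)X₀, λX₁)}`. -/
theorem unique_lambda_of_CH {St : Type*} (prec : St → St → Prop)
    (comp : St → St → St) (scale : ℝ → St → St) (Γ : Set St)
    (comp_comm : ∀ X Y, comp X Y = comp Y X)
    (comp_assoc : ∀ X Y Z, comp (comp X Y) Z = comp X (comp Y Z))
    (scale_one : ∀ X, scale 1 X = X)
    (scale_scale : ∀ (a b : ℝ) (X : St), 0 < a → 0 < b →
      scale a (scale b X) = scale (a * b) X)
    (scale_comp : ∀ (a : ℝ) (X Y : St), 0 < a →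
      scale a (comp X Y) = comp (scale a X) (scale a Y))
    (A1 : ∀ X, prec X X)
    (A2 : ∀ X Y Z, prec X Y → prec Y Z → prec X Z)
    (A3 : ∀ X X' Y Y', prec X X' → prec Y Y' → prec (comp X Y) (comp X' Y'))
    (A4 : ∀ (l : ℝ) (X Y : St), 0 < l → prec X Y → prec (scale l X) (scale l Y))
    (A5 : ∀ (l : ℝ) (X : St), 0 < l → l < 1 →
      prec X (comp (scale (1 - l) X) (scale l X)) ∧
      prec (comp (scale (1 - l) X) (scale l X)) X)
    (A6 : ∀ (X Y Z₀ Z₁ : St) (ε : ℕ → ℝ), (∀ n, 0 < ε n) →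
      Filter.Tendsto ε Filter.atTop (nhds 0) →
      (∀ n, prec (comp X (scale (ε n) Z₀)) (comp Y (scale (ε n) Z₁))) →
      prec X Y)
    -- Comparison hypothesis for all two-fold scaled products Γ^{(1−λ)} × Γ^{(λ)}:
    (CH : ∀ l : ℝ, 0 ≤ l → l ≤ 1 → ∀ A B C D : St, A ∈ Γ → B ∈ Γ → C ∈ Γ → D ∈ Γ →
      prec (combo comp scale A B l) (combo comp scale C D l) ∨
      prec (combo comp scale C D l) (combo comp scale A B l))
    (X₀ X₁ X : St) (hX₀ : X₀ ∈ Γ) (hX₁ : X₁ ∈ Γ) (hX : X ∈ Γ)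
    (href : prec X₀ X₁) (hirr : ¬ prec X₁ X₀)
    (h₀ : prec X₀ X) (h₁ : prec X X₁) :
    ∃ l : ℝ, l ∈ Set.Icc (0:ℝ) 1 ∧
      (prec X (combo comp scale X₀ X₁ l) ∧ prec (combo comp scale X₀ X₁ l) X) ∧
      l = sSup {t | t ∈ Set.Icc (0:ℝ) 1 ∧ prec (combo comp scale X₀ X₁ t) X} ∧
      l = sInf {t | t ∈ Set.Icc (0:ℝ) 1 ∧ prec X (combo comp scale X₀ X₁ t)} ∧
      ∀ l' ∈ Set.Icc (0:ℝ) 1,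
        (prec X (combo comp scale X₀ X₁ l') ∧ prec (combo comp scale X₀ X₁ l') X) →
        l' = l := by
  have hA : AdiabaticAxioms prec comp scale :=
    ⟨comp_comm, comp_assoc, scale_one, scale_scale, scale_comp, A1, A2 _ _ _, A3 _ _ _ _,
      A4 _ _ _, A5, A6⟩
  have htotal : ∀ t ∈ Icc (0 : ℝ) 1,
      prec (combo comp scale X₀ X₁ t) X ∨ prec X (combo comp scale X₀ X₁ t) := fun t ht =>
    (CH t ht.1 ht.2 X₀ X₁ X X hX₀ hX₁ hX hX).imp
      (fun hle => A2 _ _ _ hle (hA.combo_self_equiv X ht).1)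
      (fun hge => A2 _ _ _ (hA.combo_self_equiv X ht).2 hge)
  obtain ⟨l, hl, hXl⟩ := hA.exists_combo_equiv href h₀ h₁ htotal
  have hgreatest : IsGreatest {t | t ∈ Icc (0 : ℝ) 1 ∧ prec (combo comp scale X₀ X₁ t) X} l :=
    ⟨⟨hl, hXl.2⟩, fun s hs =>
      hA.le_of_combo_prec_combo hirr hl.1 hs.1.2 (A2 _ _ _ hs.2 hXl.1)⟩
  have hleast : IsLeast {t | t ∈ Icc (0 : ℝ) 1 ∧ prec X (combo comp scale X₀ X₁ t)} l :=
    ⟨⟨hl, hXl.1⟩, fun t ht =>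
      hA.le_of_combo_prec_combo hirr ht.1.1 hl.2 (A2 _ _ _ hXl.2 ht.2)⟩
  exact ⟨l, hl, hXl, hgreatest.csSup_eq.symm, hleast.csInf_eq.symm, fun l' hl' hXl' =>
    le_antisymm (hgreatest.2 ⟨hl', hXl'.2⟩) (hleast.2 ⟨hl', hXl'.1⟩)⟩
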